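/- arXiv:2409.13965 — 5 statements merged into one kernel-verified Lean document; each statement's English description precedes it below -/
import Mathlib

section
/- Let σ_z > 0, v₀ ∈ ℝ, and let σ_x, σ_y : ℝ → ℝ be differentiable with σ_x(s) > 0, σ_y(s) > 0 for all s. Define ρ(x, y, s, t) := (2π)^{−3/2}/(σ_x(s)σ_y(s)σ_z)·exp(−x²/(2σ_x(s)²) − y²/(2σ_y(s)²) − (s − v₀t)²/(2σ_z²)), J_s := v₀·ρ, J_x(x, y, s, t) := (x·σ_x'(s)/σ_x(s))·J_s(x, y, s, t), and J_y(x, y, s, t) := (y·σ_y'(s)/σ_y(s))·J_s(x, y, s, t). Then for all (x, y, s, t): ∂J_x/∂x + ∂J_y/∂y + ∂J_s/∂s + ∂ρ/∂t = 0. -/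
open Real

/-!
Up to the constant `(2π)^(-3/2)`, `ρ` is a product of three one-dimensional profiles
`e^{-u²/(2σ²)}/σ`, in `x` with width `σx s`, in `y` with width `σy s`, and in `s - v₀ t` with
width `σz`. Each partial derivative of `ρ` is therefore `ρ` times a logarithmic derivative:
`∂ₓ(x ρ) = (1 - x²/σx²) ρ`, the `s`-dependence of the widths contributes
`σx'/σx (x²/σx² - 1) + σy'/σy (y²/σy² - 1)` to `∂ₛρ/ρ`, and the travelling factor contributes
`-(s - v₀t)/σz²` to `∂ₛρ/ρ` and `v₀ (s - v₀t)/σz²` to `∂ₜρ/ρ`. In the continuity equation these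
terms cancel in pairs.
-/

noncomputable def gaussianProfile (σ u : ℝ) : ℝ :=
  exp (-(u ^ 2 / (2 * σ ^ 2))) / σ

theorem hasDerivAt_gaussianProfile (σ u : ℝ) :
    HasDerivAt (gaussianProfile σ) (-(u / σ ^ 2) * gaussianProfile σ u) u := by
  refine ((((hasDerivAt_pow 2 u).div_const (2 * σ ^ 2)).neg.exp).div_const σ).congr_deriv ?_
  simp only [gaussianProfile, Pi.neg_apply]
  ring

theorem hasDerivAt_mul_gaussianProfile (σ u : ℝ) :
    HasDerivAt (fun u => u * gaussianProfile σ u)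
      ((1 - u ^ 2 / σ ^ 2) * gaussianProfile σ u) u := by
  refine ((hasDerivAt_id u).mul (hasDerivAt_gaussianProfile σ u)).congr_deriv ?_
  simp only [id]
  ring

theorem hasDerivAt_gaussianProfile_width {σ : ℝ} (hσ : σ ≠ 0) (u : ℝ) :
    HasDerivAt (fun σ => gaussianProfile σ u)
      ((u ^ 2 / σ ^ 2 - 1) / σ * gaussianProfile σ u) σ := by
  refine ((((hasDerivAt_const σ (u ^ 2)).div ((hasDerivAt_pow 2 σ).const_mul 2)
    (by positivity)).neg.exp).div (hasDerivAt_id σ) hσ).congr_deriv ?_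
  simp only [gaussianProfile, id, Pi.neg_apply, Pi.div_apply]
  field_simp
  ring

noncomputable def focusingBeamDensity (σx σy : ℝ → ℝ) (σz v₀ x y s t : ℝ) : ℝ :=
  (2 * π) ^ (-(3 : ℝ) / 2) *
    (gaussianProfile (σx s) x * gaussianProfile (σy s) y * gaussianProfile σz (s - v₀ * t))

section FocusingBeamDensity

variable (σx σy : ℝ → ℝ) (σz v₀ x y s t : ℝ)

theorem focusingBeamDensity_eq :
    focusingBeamDensity σx σy σz v₀ x y s t =
      (2 * π) ^ (-(3 : ℝ) / 2) / (σx s * σy s * σz) *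
        exp (-(x ^ 2 / (2 * (σx s) ^ 2)) - y ^ 2 / (2 * (σy s) ^ 2)
          - (s - v₀ * t) ^ 2 / (2 * σz ^ 2)) := by
  simp only [focusingBeamDensity, gaussianProfile, sub_eq_add_neg, exp_add]
  ring

theorem hasDerivAt_mul_focusingBeamDensity_x :
    HasDerivAt (fun x => x * focusingBeamDensity σx σy σz v₀ x y s t)
      ((1 - x ^ 2 / σx s ^ 2) * focusingBeamDensity σx σy σz v₀ x y s t) x := by
  have h := ((hasDerivAt_mul_gaussianProfile (σx s) x).mul_const
    (gaussianProfile (σy s) y * gaussianProfile σz (s - v₀ * t))).const_mul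
    ((2 * π) ^ (-(3 : ℝ) / 2))
  simp only [focusingBeamDensity] at h ⊢
  exact (h.congr_deriv (by ring)).congr_of_eventuallyEq (.of_forall fun x => by ring)

theorem hasDerivAt_mul_focusingBeamDensity_y :
    HasDerivAt (fun y => y * focusingBeamDensity σx σy σz v₀ x y s t)
      ((1 - y ^ 2 / σy s ^ 2) * focusingBeamDensity σx σy σz v₀ x y s t) y := by
  have h := ((hasDerivAt_mul_gaussianProfile (σy s) y).const_mul
    (gaussianProfile (σx s) x)).mul_const (gaussianProfile σz (s - v₀ * t))
    |>.const_mul ((2 * π) ^ (-(3 : ℝ) / 2))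
  simp only [focusingBeamDensity] at h ⊢
  exact (h.congr_deriv (by ring)).congr_of_eventuallyEq (.of_forall fun y => by ring)

theorem hasDerivAt_focusingBeamDensity_s {σx' σy' : ℝ} (hσx : HasDerivAt σx σx' s)
    (hσy : HasDerivAt σy σy' s) (hσx₀ : σx s ≠ 0) (hσy₀ : σy s ≠ 0) :
    HasDerivAt (fun s => focusingBeamDensity σx σy σz v₀ x y s t)
      ((σx' / σx s * (x ^ 2 / σx s ^ 2 - 1) + σy' / σy s * (y ^ 2 / σy s ^ 2 - 1)
        - (s - v₀ * t) / σz ^ 2) * focusingBeamDensity σx σy σz v₀ x y s t) s := by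
  have hX := (hasDerivAt_gaussianProfile_width hσx₀ x).comp s hσx
  have hY := (hasDerivAt_gaussianProfile_width hσy₀ y).comp s hσy
  have hZ := (hasDerivAt_gaussianProfile σz (s - v₀ * t)).comp s
    ((hasDerivAt_id s).sub_const (v₀ * t))
  have h := ((hX.mul hY).mul hZ).const_mul ((2 * π) ^ (-(3 : ℝ) / 2))
  simp only [focusingBeamDensity, Function.comp_def, id, Pi.mul_apply] at h ⊢
  exact h.congr_deriv (by ring)

theorem hasDerivAt_focusingBeamDensity_t :
    HasDerivAt (fun t => focusingBeamDensity σx σy σz v₀ x y s t)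
      (v₀ * (s - v₀ * t) / σz ^ 2 * focusingBeamDensity σx σy σz v₀ x y s t) t := by
  have hZ := (hasDerivAt_gaussianProfile σz (s - v₀ * t)).comp t
    (((hasDerivAt_id t).const_mul v₀).const_sub s)
  have h := (hZ.const_mul (gaussianProfile (σx s) x * gaussianProfile (σy s) y)).const_mul
    ((2 * π) ^ (-(3 : ℝ) / 2))
  simp only [focusingBeamDensity, Function.comp_def, id] at h ⊢
  exact h.congr_deriv (by ring)

end FocusingBeamDensity

theorem focusing_beam_continuity_equation_general (σz v₀ : ℝ)
    (σx σy : ℝ → ℝ) (hdx : Differentiable ℝ σx) (hdy : Differentiable ℝ σy)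
    (hx : ∀ s, 0 < σx s) (hy : ∀ s, 0 < σy s)
    (ρ Js Jx Jy : ℝ → ℝ → ℝ → ℝ → ℝ)
    (hρ : ∀ x y s t, ρ x y s t =
      (2 * π) ^ (-(3 : ℝ) / 2) / (σx s * σy s * σz) *
        Real.exp (-(x ^ 2 / (2 * (σx s) ^ 2)) - y ^ 2 / (2 * (σy s) ^ 2)
          - (s - v₀ * t) ^ 2 / (2 * σz ^ 2)))
    (hJs : ∀ x y s t, Js x y s t = v₀ * ρ x y s t)
    (hJx : ∀ x y s t, Jx x y s t = x * deriv σx s / σx s * Js x y s t)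
    (hJy : ∀ x y s t, Jy x y s t = y * deriv σy s / σy s * Js x y s t) :
    ∀ x y s t,
      deriv (fun x' => Jx x' y s t) x + deriv (fun y' => Jy x y' s t) y
        + deriv (fun s' => Js x y s' t) s + deriv (fun t' => ρ x y s t') t = 0 := by
  obtain rfl : ρ = focusingBeamDensity σx σy σz v₀ := by
    funext x y s t
    rw [hρ, focusingBeamDensity_eq]
  intro x y s t
  have hJx' : HasDerivAt (fun x' => Jx x' y s t) (deriv σx s / σx s * v₀ *
      ((1 - x ^ 2 / σx s ^ 2) * focusingBeamDensity σx σy σz v₀ x y s t)) x := by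
    refine ((hasDerivAt_mul_focusingBeamDensity_x ..).const_mul _).congr_of_eventuallyEq
      (.of_forall fun x' => ?_)
    simp only [hJx, hJs]
    ring
  have hJy' : HasDerivAt (fun y' => Jy x y' s t) (deriv σy s / σy s * v₀ *
      ((1 - y ^ 2 / σy s ^ 2) * focusingBeamDensity σx σy σz v₀ x y s t)) y := by
    refine ((hasDerivAt_mul_focusingBeamDensity_y ..).const_mul _).congr_of_eventuallyEq
      (.of_forall fun y' => ?_)
    simp only [hJy, hJs]
    ring
  have hJs' := ((hasDerivAt_focusingBeamDensity_s σx σy σz v₀ x y s t (hdx s).hasDerivAt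
    (hdy s).hasDerivAt (hx s).ne' (hy s).ne').const_mul v₀).congr_of_eventuallyEq
      (.of_forall fun s' => hJs x y s' t)
  rw [hJx'.deriv, hJy'.deriv, hJs'.deriv, (hasDerivAt_focusingBeamDensity_t ..).deriv]
  ring

/-- The continuity equation `∂Jx/∂x + ∂Jy/∂y + ∂Js/∂s + ∂ρ/∂t = 0` holds exactly
for the focusing Gaussian beam density `ρ`, longitudinal current `Js = v₀ρ`, and
transverse currents `Jx = (x σx'/σx) Js`, `Jy = (y σy'/σy) Js`. -/
theorem focusing_beam_continuity_equation (σz v₀ : ℝ) (hσz : 0 < σz)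
    (σx σy : ℝ → ℝ) (hdx : Differentiable ℝ σx) (hdy : Differentiable ℝ σy)
    (hx : ∀ s, 0 < σx s) (hy : ∀ s, 0 < σy s)
    (ρ Js Jx Jy : ℝ → ℝ → ℝ → ℝ → ℝ)
    (hρ : ∀ x y s t, ρ x y s t =
      (2 * π) ^ (-(3 : ℝ) / 2) / (σx s * σy s * σz) *
        Real.exp (-(x ^ 2 / (2 * (σx s) ^ 2)) - y ^ 2 / (2 * (σy s) ^ 2)
          - (s - v₀ * t) ^ 2 / (2 * σz ^ 2)))
    (hJs : ∀ x y s t, Js x y s t = v₀ * ρ x y s t)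
    (hJx : ∀ x y s t, Jx x y s t = x * deriv σx s / σx s * Js x y s t)
    (hJy : ∀ x y s t, Jy x y s t = y * deriv σy s / σy s * Js x y s t) :
    ∀ x y s t,
      deriv (fun x' => Jx x' y s t) x + deriv (fun y' => Jy x y' s t) y
        + deriv (fun s' => Js x y s' t) s + deriv (fun t' => ρ x y s t') t = 0 :=
  focusing_beam_continuity_equation_general σz v₀ σx σy hdx hdy hx hy ρ Js Jx Jy hρ hJs hJx hJy
end

section
/- Fix real numbers x, y, z and positive reals σ_x, σ_y, σ_z with σ_y ≤ σ_x, and set A := σ_y²/σ_x². For ε > 0 and w ∈ (0, 1) define ψ_ε(w) := exp(−(1−w)x²/(2σ_x²(1−w+Aw)) − (1−w)y²/(2σ_y²) − (1−w)z²/(2σ_z²(1−w+εw))) / ((1−w)^{1/2}(1−w+Aw)^{1/2}(1−w+εw)^{1/2}). Then lim_{ε→0⁺} ∫₀¹ (∂ψ_ε/∂x)(w) dw = −(x/σ_x²)·exp(−z²/(2σ_z²))·∫₀¹ exp(−(1−w)x²/(2σ_x²(1−w+Aw)) − (1−w)y²/(2σ_y²)) / (1−w+Aw)^{3/2} dw.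 -/
/-!
Differentiating under the exponential, `∂ψ_ε/∂x = -(1-w)x / (σx²(1-w+Aw)) · ψ_ε`. The exponent
of `ψ_ε` is nonpositive and `1-w+εw ≥ 1-w`, so `ψ_ε ≤ ((1-w)(1-w+Aw)^{1/2})⁻¹`; the factor
`1-w` cancels and, since `A ≤ 1-w+Aw` for `A ≤ 1`, the derivative is bounded by
`|x| / (σx² A^{3/2})` uniformly in `ε > 0` and `w ∈ (0,1)`. For fixed `w < 1`, `ψ_ε` is continuous
in `ε` at `0`, so bounded convergence on `(0,1)` gives the limit.
-/

open MeasureTheory Filter Topology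

namespace TwoDimLimit

open Real Set

/-- `ψ_ε(w)`, with the transverse coordinate `x` of the paper made a variable `x'`. -/
noncomputable def psi (σx σy σz A y z ε x' w : ℝ) : ℝ :=
  exp (-((1 - w) * x' ^ 2 / (2 * σx ^ 2 * (1 - w + A * w)))
      - (1 - w) * y ^ 2 / (2 * σy ^ 2)
      - (1 - w) * z ^ 2 / (2 * σz ^ 2 * (1 - w + ε * w))) /
    ((1 - w) ^ ((1 : ℝ) / 2) * (1 - w + A * w) ^ ((1 : ℝ) / 2)
      * (1 - w + ε * w) ^ ((1 : ℝ) / 2))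

lemma rpow_three_halves {v : ℝ} (hv : 0 ≤ v) : v ^ ((3 : ℝ) / 2) = v * v ^ ((1 : ℝ) / 2) := by
  rw [show (3 : ℝ) / 2 = 1 + 1 / 2 by norm_num, rpow_add' hv (by norm_num), rpow_one]

lemma rpow_half_mul_self {u : ℝ} (hu : 0 ≤ u) : u ^ ((1 : ℝ) / 2) * u ^ ((1 : ℝ) / 2) = u := by
  rw [← sqrt_eq_rpow, mul_self_sqrt hu]

variable {σx σy σz A y z : ℝ}

lemma hasDerivAt_psi (ε x w : ℝ) :
    HasDerivAt (fun x' => psi σx σy σz A y z ε x' w)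
      (-((1 - w) * x / (σx ^ 2 * (1 - w + A * w))) * psi σx σy σz A y z ε x w) x := by
  have hexp := (((((hasDerivAt_pow 2 x).const_mul (1 - w)).div_const
    (2 * σx ^ 2 * (1 - w + A * w))).neg.sub_const ((1 - w) * y ^ 2 / (2 * σy ^ 2))).sub_const
    ((1 - w) * z ^ 2 / (2 * σz ^ 2 * (1 - w + ε * w)))).exp
  refine (hexp.div_const ((1 - w) ^ ((1 : ℝ) / 2) * (1 - w + A * w) ^ ((1 : ℝ) / 2)
    * (1 - w + ε * w) ^ ((1 : ℝ) / 2))).congr_deriv ?_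
  simp only [psi, Pi.neg_apply]
  generalize 1 - w + A * w = v
  ring

lemma deriv_psi (ε x w : ℝ) :
    deriv (fun x' => psi σx σy σz A y z ε x' w) x =
      -((1 - w) * x / (σx ^ 2 * (1 - w + A * w))) * psi σx σy σz A y z ε x w :=
  (hasDerivAt_psi ε x w).deriv

lemma measurable_deriv_psi (ε x : ℝ) :
    Measurable fun w => deriv (fun x' => psi σx σy σz A y z ε x' w) x := by
  simp only [deriv_psi]
  unfold psi
  fun_prop

lemma psi_le (hA : 0 ≤ A) {ε : ℝ} (hε : 0 ≤ ε) (x' : ℝ) {w : ℝ} (hw : w ∈ Ioo 0 1) :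
    psi σx σy σz A y z ε x' w ≤ ((1 - w) * (1 - w + A * w) ^ ((1 : ℝ) / 2))⁻¹ := by
  obtain ⟨hw₀, hw₁⟩ := hw
  have hu : 0 < 1 - w := sub_pos.mpr hw₁
  have hexp : exp (-((1 - w) * x' ^ 2 / (2 * σx ^ 2 * (1 - w + A * w)))
      - (1 - w) * y ^ 2 / (2 * σy ^ 2) - (1 - w) * z ^ 2 / (2 * σz ^ 2 * (1 - w + ε * w))) ≤ 1 := by
    rw [exp_le_one_iff]
    have : 0 ≤ (1 - w) * x' ^ 2 / (2 * σx ^ 2 * (1 - w + A * w)) := by positivity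
    have : 0 ≤ (1 - w) * y ^ 2 / (2 * σy ^ 2) := by positivity
    have : 0 ≤ (1 - w) * z ^ 2 / (2 * σz ^ 2 * (1 - w + ε * w)) := by positivity
    linarith
  calc psi σx σy σz A y z ε x' w
      ≤ 1 / ((1 - w) ^ ((1 : ℝ) / 2) * (1 - w + A * w) ^ ((1 : ℝ) / 2)
          * (1 - w) ^ ((1 : ℝ) / 2)) := by
        unfold psi
        gcongr
        linarith [mul_nonneg hε hw₀.le]
    _ = ((1 - w) * (1 - w + A * w) ^ ((1 : ℝ) / 2))⁻¹ := by
        rw [mul_right_comm, rpow_half_mul_self hu.le, one_div]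

lemma psi_zero (x' : ℝ) {w : ℝ} (hw : w < 1) :
    psi σx σy σz A y z 0 x' w =
      exp (-((1 - w) * x' ^ 2 / (2 * σx ^ 2 * (1 - w + A * w)))
        - (1 - w) * y ^ 2 / (2 * σy ^ 2) - z ^ 2 / (2 * σz ^ 2)) /
      ((1 - w) * (1 - w + A * w) ^ ((1 : ℝ) / 2)) := by
  have hu : 0 < 1 - w := sub_pos.mpr hw
  simp only [psi, zero_mul, add_zero]
  rw [mul_right_comm ((1 - w) ^ _), rpow_half_mul_self hu.le, mul_comm (2 * σz ^ 2) (1 - w),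
    mul_div_mul_left _ _ hu.ne']

lemma continuousAt_psi_zero (hA : 0 ≤ A) (hσz : σz ≠ 0) (x' : ℝ) {w : ℝ} (hw : w ∈ Ioo 0 1) :
    ContinuousAt (fun ε => psi σx σy σz A y z ε x' w) 0 := by
  obtain ⟨hw₀, hw₁⟩ := hw
  have hu : 0 < 1 - w := sub_pos.mpr hw₁
  unfold psi
  fun_prop (disch := positivity)

lemma norm_deriv_psi_le (hσx : σx ≠ 0) (hA₀ : 0 < A) (hA₁ : A ≤ 1) {ε : ℝ} (hε : 0 ≤ ε) (x : ℝ)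
    {w : ℝ} (hw : w ∈ Ioo 0 1) :
    ‖deriv (fun x' => psi σx σy σz A y z ε x' w) x‖ ≤ |x| / (σx ^ 2 * A ^ ((3 : ℝ) / 2)) := by
  have hw₀ := hw.1
  have hu : 0 < 1 - w := sub_pos.mpr hw.2
  have hAv : A ≤ 1 - w + A * w := by nlinarith
  have hv : 0 < σx ^ 2 * (1 - w + A * w) := by positivity
  have hpsi : 0 ≤ psi σx σy σz A y z ε x w := by
    unfold psi
    positivity
  rw [deriv_psi, norm_mul, norm_neg, Real.norm_eq_abs, Real.norm_eq_abs, abs_of_nonneg hpsi,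
    abs_div, abs_of_pos hv, abs_mul, abs_of_pos hu]
  calc (1 - w) * |x| / (σx ^ 2 * (1 - w + A * w)) * psi σx σy σz A y z ε x w
      ≤ (1 - w) * |x| / (σx ^ 2 * (1 - w + A * w))
          * ((1 - w) * (1 - w + A * w) ^ ((1 : ℝ) / 2))⁻¹ := by
        gcongr
        exact psi_le hA₀.le hε x hw
    _ = |x| / (σx ^ 2 * (1 - w + A * w) ^ ((3 : ℝ) / 2)) := by
        rw [rpow_three_halves (by linarith)]
        field_simp
    _ ≤ |x| / (σx ^ 2 * A ^ ((3 : ℝ) / 2)) := by gcongr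

lemma tendsto_deriv_psi (hσx : σx ≠ 0) (hσz : σz ≠ 0) (hA : 0 ≤ A) (x : ℝ) {w : ℝ}
    (hw : w ∈ Ioo 0 1) :
    Tendsto (fun ε => deriv (fun x' => psi σx σy σz A y z ε x' w) x) (𝓝 0)
      (𝓝 (-(x / σx ^ 2) * exp (-(z ^ 2 / (2 * σz ^ 2))) *
        (exp (-((1 - w) * x ^ 2 / (2 * σx ^ 2 * (1 - w + A * w)))
          - (1 - w) * y ^ 2 / (2 * σy ^ 2)) / (1 - w + A * w) ^ ((3 : ℝ) / 2)))) := by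
  have hu : 0 < 1 - w := sub_pos.mpr hw.2
  have hv : 0 < 1 - w + A * w := by nlinarith [hw.1]
  simp only [deriv_psi]
  convert ((continuousAt_psi_zero hA hσz x hw).tendsto.const_mul
    (-((1 - w) * x / (σx ^ 2 * (1 - w + A * w))))) using 2
  rw [psi_zero x hw.2, rpow_three_halves hv.le, exp_sub _ (z ^ 2 / _), exp_neg]
  field_simp

end TwoDimLimit

/-- As `ε → 0⁺`, the integral `∫₀¹ ∂ψ_ε/∂x dw` converges to the 2D limit,
the first line of Eq. (17): limit and integration can be interchanged by
dominated convergence. Here `ψ ε x' w` is the integrand of Eq. (16) viewed as a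
function of the transverse coordinate `x'`. -/
theorem two_dim_limit_Ex (x y z σx σy σz : ℝ)
    (hσx : 0 < σx) (hσy : 0 < σy) (hσz : 0 < σz) (hyx : σy ≤ σx)
    (A : ℝ) (hA : A = σy ^ 2 / σx ^ 2)
    (ψ : ℝ → ℝ → ℝ → ℝ)
    (hψ : ∀ ε x' w, ψ ε x' w =
      Real.exp (-((1 - w) * x' ^ 2 / (2 * σx ^ 2 * (1 - w + A * w)))
          - (1 - w) * y ^ 2 / (2 * σy ^ 2)
          - (1 - w) * z ^ 2 / (2 * σz ^ 2 * (1 - w + ε * w))) /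
        ((1 - w) ^ ((1 : ℝ) / 2) * (1 - w + A * w) ^ ((1 : ℝ) / 2)
          * (1 - w + ε * w) ^ ((1 : ℝ) / 2))) :
    Tendsto (fun ε => ∫ w in Set.Ioo (0 : ℝ) 1, deriv (fun x' => ψ ε x' w) x)
      (𝓝[>] 0)
      (𝓝 (-(x / σx ^ 2) * Real.exp (-(z ^ 2 / (2 * σz ^ 2))) *
        ∫ w in Set.Ioo (0 : ℝ) 1,
          Real.exp (-((1 - w) * x ^ 2 / (2 * σx ^ 2 * (1 - w + A * w)))
              - (1 - w) * y ^ 2 / (2 * σy ^ 2)) / (1 - w + A * w) ^ ((3 : ℝ) / 2))) := by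
  have hA₀ : 0 < A := hA ▸ by positivity
  have hA₁ : A ≤ 1 := hA ▸ (div_le_one (by positivity)).mpr (pow_le_pow_left₀ hσy.le hyx 2)
  obtain rfl : ψ = fun ε x' w => TwoDimLimit.psi σx σy σz A y z ε x' w := by
    ext ε x' w
    exact hψ ε x' w
  rw [← integral_const_mul]
  refine tendsto_integral_filter_of_norm_le_const
    (Eventually.of_forall fun ε => (TwoDimLimit.measurable_deriv_psi ε x).aestronglyMeasurable)
    ⟨|x| / (σx ^ 2 * A ^ ((3 : ℝ) / 2)), ?_⟩ ?_
  · filter_upwards [self_mem_nhdsWithin] with ε (hε : 0 < ε)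
    filter_upwards [ae_restrict_mem measurableSet_Ioo] with w hw
    exact TwoDimLimit.norm_deriv_psi_le hσx.ne' hA₀ hA₁ hε.le x hw
  · filter_upwards [ae_restrict_mem measurableSet_Ioo] with w hw
    exact (TwoDimLimit.tendsto_deriv_psi hσx.ne' hσz.ne' hA₀.le x hw).mono_left nhdsWithin_le_nhds
end

section
/- Fix real numbers x, y, z and positive reals σ_x, σ_y, σ_z with σ_y ≤ σ_x, and set A := σ_y²/σ_x². For ε > 0 and w ∈ (0, 1) define ψ_ε(w) := exp(−(1−w)x²/(2σ_x²(1−w+Aw)) − (1−w)y²/(2σ_y²) − (1−w)z²/(2σ_z²(1−w+εw))) / ((1−w)^{1/2}(1−w+Aw)^{1/2}(1−w+εw)^{1/2}). Then lim_{ε→0⁺} ∫₀¹ (∂ψ_ε/∂y)(w) dw = −(y/σ_y²)·exp(−z²/(2σ_z²))·∫₀¹ exp(−(1−w)x²/(2σ_x²(1−w+Aw)) − (1−w)y²/(2σ_y²)) / (1−w+Aw)^{1/2} dw. -/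
/-!
Differentiating in `y` multiplies `ψ_ε` by `-(1 - w) y / σ_y²`. That factor `1 - w` cancels the
only singularity of `ψ_ε` at `w = 1`: the Gaussian factor is at most `1`, and
`√(1 - w) √(1 - w + ε w) ≥ 1 - w`, `√(1 - w + A w) ≥ √(min 1 A)`. So the integrands are bounded
uniformly in `ε > 0`. For fixed `w` they are continuous at `ε = 0`, where the `z`-term becomes
`z² / (2 σ_z²)`. The bounded convergence theorem on `(0, 1)` then lets the limit pass under the
integral.
-/

open MeasureTheory Filter Topology Real Set

theorem tendsto_const_div_add_mul {c : ℝ} (hc : c ≠ 0) (w : ℝ) :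
    Tendsto (fun ε => c / (c + ε * w)) (𝓝 0) (𝓝 1) := by
  have hcont : ContinuousAt (fun ε => c / (c + ε * w)) 0 :=
    continuousAt_const.div (by fun_prop) (by simpa using hc)
  simpa [div_self hc] using hcont.tendsto

theorem min_one_le_one_sub_add_mul (A : ℝ) {w : ℝ} (hw0 : 0 ≤ w) (hw1 : w ≤ 1) :
    min 1 A ≤ 1 - w + A * w := by
  nlinarith [min_le_left 1 A, min_le_right 1 A]

section

variable (x z σx σy σz A : ℝ)

noncomputable def psi (ε y w : ℝ) : ℝ :=
  exp (-((1 - w) * x ^ 2 / (2 * σx ^ 2 * (1 - w + A * w))) - (1 - w) * y ^ 2 / (2 * σy ^ 2)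
      - (1 - w) * z ^ 2 / (2 * σz ^ 2 * (1 - w + ε * w))) /
    (√(1 - w) * √(1 - w + A * w) * √(1 - w + ε * w))

theorem hasDerivAt_psi (ε y w : ℝ) :
    HasDerivAt (fun y' => psi x z σx σy σz A ε y' w)
      (-(y / σy ^ 2) * ((1 - w) * psi x z σx σy σz A ε y w)) y := by
  have hexponent := (((hasDerivAt_pow 2 y).const_mul (1 - w)).div_const (2 * σy ^ 2)).const_sub
    (-((1 - w) * x ^ 2 / (2 * σx ^ 2 * (1 - w + A * w)))) |>.sub_const
    ((1 - w) * z ^ 2 / (2 * σz ^ 2 * (1 - w + ε * w)))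
  refine (hexponent.exp.div_const (√(1 - w) * √(1 - w + A * w) * √(1 - w + ε * w))).congr_deriv ?_
  unfold psi
  push_cast
  ring

theorem measurable_one_sub_mul_psi (ε y : ℝ) :
    Measurable fun w => (1 - w) * psi x z σx σy σz A ε y w := by
  unfold psi
  fun_prop

theorem abs_one_sub_mul_psi_le {ε y w : ℝ} (hA : 0 < A) (hε : 0 ≤ ε) (hw : w ∈ Ioo 0 1) :
    |(1 - w) * psi x z σx σy σz A ε y w| ≤ 1 / √(min 1 A) := by
  obtain ⟨hw0, hw1⟩ := hw
  have h1w : 0 < 1 - w := by linarith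
  have hAw : 0 < 1 - w + A * w := by nlinarith
  have hεw : 0 < 1 - w + ε * w := by nlinarith
  have hmin : 0 < √(min 1 A) := sqrt_pos.2 (lt_min one_pos hA)
  have hexp : exp (-((1 - w) * x ^ 2 / (2 * σx ^ 2 * (1 - w + A * w)))
      - (1 - w) * y ^ 2 / (2 * σy ^ 2) - (1 - w) * z ^ 2 / (2 * σz ^ 2 * (1 - w + ε * w))) ≤ 1 := by
    rw [exp_le_one_iff]
    have : 0 ≤ (1 - w) * x ^ 2 / (2 * σx ^ 2 * (1 - w + A * w)) := by positivity
    have : 0 ≤ (1 - w) * y ^ 2 / (2 * σy ^ 2) := by positivity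
    have : 0 ≤ (1 - w) * z ^ 2 / (2 * σz ^ 2 * (1 - w + ε * w)) := by positivity
    linarith
  have hden : (1 - w) * √(min 1 A) ≤ √(1 - w) * √(1 - w + A * w) * √(1 - w + ε * w) :=
    calc (1 - w) * √(min 1 A) = √(1 - w) * √(min 1 A) * √(1 - w) := by
          rw [mul_right_comm, mul_self_sqrt h1w.le]
      _ ≤ _ := by
          gcongr
          · exact min_one_le_one_sub_add_mul A hw0.le hw1.le
          · nlinarith
  rw [abs_of_nonneg (by unfold psi; positivity), psi, mul_div_assoc',
    div_le_div_iff₀ (by positivity) hmin]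
  calc (1 - w) * exp _ * √(min 1 A) ≤ (1 - w) * 1 * √(min 1 A) := by gcongr
    _ ≤ _ := by rw [mul_one, one_mul]; exact hden

theorem tendsto_one_sub_mul_psi {y w : ℝ} (hA : 0 < A) (hw : w ∈ Ioo 0 1) :
    Tendsto (fun ε => (1 - w) * psi x z σx σy σz A ε y w) (𝓝 0)
      (𝓝 (exp (-(z ^ 2 / (2 * σz ^ 2))) *
        (exp (-((1 - w) * x ^ 2 / (2 * σx ^ 2 * (1 - w + A * w)))
          - (1 - w) * y ^ 2 / (2 * σy ^ 2)) / √(1 - w + A * w)))) := by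
  obtain ⟨hw0, hw1⟩ := hw
  have h1w : 0 < 1 - w := by linarith
  have hAw : 0 < 1 - w + A * w := by nlinarith
  have hz : Tendsto (fun ε => (1 - w) * z ^ 2 / (2 * σz ^ 2 * (1 - w + ε * w))) (𝓝 0)
      (𝓝 (z ^ 2 / (2 * σz ^ 2))) := by
    simp_rw [mul_comm (1 - w), mul_div_mul_comm]
    simpa using (tendsto_const_div_add_mul h1w.ne' w).const_mul (z ^ 2 / (2 * σz ^ 2))
  have hsqrt : Tendsto (fun ε => √(1 - w + ε * w)) (𝓝 0) (𝓝 √(1 - w)) :=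
    (by fun_prop : Continuous fun ε : ℝ => √(1 - w + ε * w)).tendsto' 0 _ (by simp)
  have hlim := ((tendsto_const_nhds (x := -((1 - w) * x ^ 2 / (2 * σx ^ 2 * (1 - w + A * w)))
      - (1 - w) * y ^ 2 / (2 * σy ^ 2))).sub hz).rexp.div
    ((tendsto_const_nhds (x := √(1 - w) * √(1 - w + A * w))).mul hsqrt) (by positivity)
  convert hlim.const_mul (1 - w) using 2
  · rfl
  rw [sub_eq_add_neg _ (z ^ 2 / _), exp_add]
  field_simp
  exact sq_sqrt h1w.le

end

theorem two_dim_limit_Ey_general (x y z σx σy σz : ℝ)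
    (hσx : 0 < σx) (hσy : 0 < σy)
    (A : ℝ) (hA : A = σy ^ 2 / σx ^ 2)
    (ψ : ℝ → ℝ → ℝ → ℝ)
    (hψ : ∀ ε y' w, ψ ε y' w =
      Real.exp (-((1 - w) * x ^ 2 / (2 * σx ^ 2 * (1 - w + A * w)))
          - (1 - w) * y' ^ 2 / (2 * σy ^ 2)
          - (1 - w) * z ^ 2 / (2 * σz ^ 2 * (1 - w + ε * w))) /
        ((1 - w) ^ ((1 : ℝ) / 2) * (1 - w + A * w) ^ ((1 : ℝ) / 2)
          * (1 - w + ε * w) ^ ((1 : ℝ) / 2))) :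
    Tendsto (fun ε => ∫ w in Set.Ioo (0 : ℝ) 1, deriv (fun y' => ψ ε y' w) y)
      (𝓝[>] 0)
      (𝓝 (-(y / σy ^ 2) * Real.exp (-(z ^ 2 / (2 * σz ^ 2))) *
        ∫ w in Set.Ioo (0 : ℝ) 1,
          Real.exp (-((1 - w) * x ^ 2 / (2 * σx ^ 2 * (1 - w + A * w)))
              - (1 - w) * y ^ 2 / (2 * σy ^ 2)) / (1 - w + A * w) ^ ((1 : ℝ) / 2))) := by
  have hA0 : 0 < A := hA ▸ by positivity
  obtain rfl : ψ = psi x z σx σy σz A := by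
    funext ε y' w
    simp only [hψ, psi, sqrt_eq_rpow]
  simp only [← sqrt_eq_rpow, fun ε w => (hasDerivAt_psi x z σx σy σz A ε y w).deriv,
    integral_const_mul]
  rw [mul_assoc, ← integral_const_mul]
  refine (tendsto_integral_filter_of_norm_le_const ?_ ⟨1 / √(min 1 A), ?_⟩ ?_).const_mul _
  · exact .of_forall fun ε => (measurable_one_sub_mul_psi x z σx σy σz A ε y).aestronglyMeasurable
  · filter_upwards [self_mem_nhdsWithin] with ε (hε : 0 < ε)
    exact ae_restrict_of_forall_mem measurableSet_Ioo fun w hw =>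
      abs_one_sub_mul_psi_le x z σx σy σz A hA0 hε.le hw
  · exact ae_restrict_of_forall_mem measurableSet_Ioo fun w hw =>
      (tendsto_one_sub_mul_psi x z σx σy σz A hA0 hw).mono_left nhdsWithin_le_nhds

/-- As `ε → 0⁺`, the integral `∫₀¹ ∂ψ_ε/∂y dw` converges to the 2D limit,
the second line of Eq. (17): limit and integration can be interchanged by
dominated convergence. Here `ψ ε y' w` is the integrand of Eq. (16) viewed as a
function of the transverse coordinate `y'`. -/
theorem two_dim_limit_Ey (x y z σx σy σz : ℝ)
    (hσx : 0 < σx) (hσy : 0 < σy) (hσz : 0 < σz) (hyx : σy ≤ σx)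
    (A : ℝ) (hA : A = σy ^ 2 / σx ^ 2)
    (ψ : ℝ → ℝ → ℝ → ℝ)
    (hψ : ∀ ε y' w, ψ ε y' w =
      Real.exp (-((1 - w) * x ^ 2 / (2 * σx ^ 2 * (1 - w + A * w)))
          - (1 - w) * y' ^ 2 / (2 * σy ^ 2)
          - (1 - w) * z ^ 2 / (2 * σz ^ 2 * (1 - w + ε * w))) /
        ((1 - w) ^ ((1 : ℝ) / 2) * (1 - w + A * w) ^ ((1 : ℝ) / 2)
          * (1 - w + ε * w) ^ ((1 : ℝ) / 2))) :
    Tendsto (fun ε => ∫ w in Set.Ioo (0 : ℝ) 1, deriv (fun y' => ψ ε y' w) y)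
      (𝓝[>] 0)
      (𝓝 (-(y / σy ^ 2) * Real.exp (-(z ^ 2 / (2 * σz ^ 2))) *
        ∫ w in Set.Ioo (0 : ℝ) 1,
          Real.exp (-((1 - w) * x ^ 2 / (2 * σx ^ 2 * (1 - w + A * w)))
              - (1 - w) * y ^ 2 / (2 * σy ^ 2)) / (1 - w + A * w) ^ ((1 : ℝ) / 2))) :=
  two_dim_limit_Ey_general x y z σx σy σz hσx hσy A hA ψ hψ
end

section
/- Fix real numbers x, y, z and positive reals σ_x, σ_y, σ_z with σ_y ≤ σ_x, and set A := σ_y²/σ_x². For ε ≥ 0 and w ∈ (0, 1) define ψ_ε(w) := exp(−(1−w)x²/(2σ_x²(1−w+Aw)) − (1−w)y²/(2σ_y²) − (1−w)z²/(2σ_z²(1−w+εw))) / ((1−w)^{1/2}(1−w+Aw)^{1/2}(1−w+εw)^{1/2}). Then lim_{ε→0⁺} ∫₀¹ (∂²ψ_ε/∂x²)(w) dw = ∫₀¹ (∂²ψ₀/∂x²)(w) dw and lim_{ε→0⁺} ∫₀¹ (∂²ψ_ε/∂y²)(w) dw = ∫₀¹ (∂²ψ₀/∂y²)(w) dw, where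 ψ₀ is obtained by setting ε = 0, and both limiting integrals are finite. -/
/-! For fixed `w` the integrand is `exp (b - a t²) / D` in a transverse coordinate `t`, so its
second derivative is `4 a² t² - 2 a` times the integrand. The coefficient `a` is `O(1 - w)`, the
exponential is at most `1`, and `D ≥ (1 - w) √A` uniformly in `ε ≥ 0`; hence these second
derivatives are bounded on `(0, 1)` uniformly in `ε`, and dominated convergence with a constant
bound applies. -/

open MeasureTheory Filter Topology Set

lemma iteratedDeriv_two_exp_sub_mul_sq_div (a b D x : ℝ) :
    iteratedDeriv 2 (fun t => Real.exp (b - a * t ^ 2) / D) x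
      = (4 * a ^ 2 * x ^ 2 - 2 * a) * (Real.exp (b - a * x ^ 2) / D) := by
  have hexponent (t : ℝ) : HasDerivAt (fun s => b - a * s ^ 2) (-(2 * a * t)) t := by
    simpa [mul_comm, mul_left_comm] using ((hasDerivAt_pow 2 t).const_mul a).const_sub b
  have hderiv : deriv (fun t => Real.exp (b - a * t ^ 2) / D)
      = fun t => -(2 * a * t) * Real.exp (b - a * t ^ 2) / D :=
    funext fun t => by simpa [mul_comm] using ((hexponent t).exp.div_const D).deriv
  have hsecond : HasDerivAt (fun t => -(2 * a * t) * Real.exp (b - a * t ^ 2) / D)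
      ((-(2 * a) * Real.exp (b - a * x ^ 2)
        + -(2 * a * x) * (Real.exp (b - a * x ^ 2) * -(2 * a * x))) / D) x := by
    refine (HasDerivAt.mul ?_ (hexponent x).exp).div_const D
    simpa using ((hasDerivAt_id x).const_mul (2 * a)).fun_neg
  rw [iteratedDeriv_succ, iteratedDeriv_one, hderiv, hsecond.deriv]
  ring

lemma le_one_sub_add_mul {A w : ℝ} (hA : A ≤ 1) (hw : w ≤ 1) : A ≤ 1 - w + A * w := by
  nlinarith

lemma one_sub_mul_rpow_half_le {A ε w : ℝ} (hA1 : A ≤ 1) (hε : 0 ≤ ε)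
    (hw : w ∈ Icc (0 : ℝ) 1) :
    (1 - w) * A ^ ((1 : ℝ) / 2)
      ≤ (1 - w) ^ ((1 : ℝ) / 2) * (1 - w + A * w) ^ ((1 : ℝ) / 2)
        * (1 - w + ε * w) ^ ((1 : ℝ) / 2) := by
  simp only [← Real.sqrt_eq_rpow]
  have h1w : 0 ≤ 1 - w := by linarith [hw.2]
  calc (1 - w) * √A = √(1 - w) * √A * √(1 - w) := by
        rw [mul_right_comm, Real.mul_self_sqrt h1w]
    _ ≤ √(1 - w) * √(1 - w + A * w) * √(1 - w + ε * w) := by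
        gcongr
        · exact le_one_sub_add_mul hA1 hw.2
        · nlinarith [hw.1]

/-- The integrand of Eq. (16) as a function of one transverse coordinate `t`: `a w` is the
Gaussian coefficient of `t`, and `c w` is the exponent contributed by the other transverse
coordinate. -/
noncomputable def potentialIntegrand (A σz z : ℝ) (a c : ℝ → ℝ) (ε t w : ℝ) : ℝ :=
  Real.exp (-(c w) - (1 - w) * z ^ 2 / (2 * σz ^ 2 * (1 - w + ε * w)) - a w * t ^ 2) /
    ((1 - w) ^ ((1 : ℝ) / 2) * (1 - w + A * w) ^ ((1 : ℝ) / 2)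
      * (1 - w + ε * w) ^ ((1 : ℝ) / 2))

section potentialIntegrand

variable {A σz z : ℝ} {a c : ℝ → ℝ}

lemma iteratedDeriv_two_potentialIntegrand (ε t w : ℝ) :
    iteratedDeriv 2 (fun s => potentialIntegrand A σz z a c ε s w) t
      = (4 * a w ^ 2 * t ^ 2 - 2 * a w) * potentialIntegrand A σz z a c ε t w :=
  iteratedDeriv_two_exp_sub_mul_sq_div _ _ _ t

lemma measurable_potentialIntegrand (ha : Measurable a) (hc : Measurable c) (ε t : ℝ) :
    Measurable (potentialIntegrand A σz z a c ε t) := by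
  unfold potentialIntegrand
  fun_prop

lemma continuousAt_potentialIntegrand (hA : 0 ≤ A) {w : ℝ} (hw : w ∈ Ioo (0 : ℝ) 1) (t : ℝ) :
    ContinuousAt (fun ε => potentialIntegrand A σz z a c ε t w) 0 := by
  have h1w : 0 < 1 - w := by linarith [hw.2]
  have hR : 1 - w + 0 * w ≠ 0 := by simpa using h1w.ne'
  have hD : (1 - w) ^ ((1 : ℝ) / 2) * (1 - w + A * w) ^ ((1 : ℝ) / 2)
      * (1 - w + 0 * w) ^ ((1 : ℝ) / 2) ≠ 0 := by
    have : 0 < 1 - w + A * w := by nlinarith [hw.1]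
    simp only [zero_mul, add_zero]
    positivity
  -- splitting off `2 * σz ^ 2` leaves only `1 - w + ε * w` to be nonzero, also when `σz = 0`
  simp only [potentialIntegrand, div_mul_eq_div_div _ (2 * σz ^ 2)]
  fun_prop (disch := first | exact hR | exact Or.inl hR | exact hD)

lemma abs_mul_potentialIntegrand_le {m ε t w : ℝ} (hA0 : 0 < A) (hA1 : A ≤ 1) (hε : 0 ≤ ε)
    (hw : w ∈ Ioo (0 : ℝ) 1) (ha0 : 0 ≤ a w) (ham : a w ≤ (1 - w) * m) (hc : 0 ≤ c w) :
    |(4 * a w ^ 2 * t ^ 2 - 2 * a w) * potentialIntegrand A σz z a c ε t w|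
      ≤ (4 * m ^ 2 * t ^ 2 + 2 * m) / A ^ ((1 : ℝ) / 2) := by
  obtain ⟨hw0, hw1⟩ := hw
  have h1w : 0 < 1 - w := by linarith
  have hm : 0 ≤ m := nonneg_of_mul_nonneg_right (ha0.trans ham) h1w
  have hnum : |4 * a w ^ 2 * t ^ 2 - 2 * a w| ≤ (1 - w) * (4 * m ^ 2 * t ^ 2 + 2 * m) := by
    have hsq : a w ^ 2 ≤ (1 - w) * m ^ 2 := by nlinarith
    rw [abs_le]
    constructor <;> nlinarith [mul_le_mul_of_nonneg_right hsq (sq_nonneg t), sq_nonneg (a w * t)]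
  have hexp : Real.exp (-(c w) - (1 - w) * z ^ 2 / (2 * σz ^ 2 * (1 - w + ε * w))
      - a w * t ^ 2) ≤ 1 := by
    rw [Real.exp_le_one_iff]
    have : 0 ≤ (1 - w) * z ^ 2 / (2 * σz ^ 2 * (1 - w + ε * w)) := by
      apply div_nonneg <;> positivity
    nlinarith [sq_nonneg t]
  have hden := one_sub_mul_rpow_half_le hA1 hε ⟨hw0.le, hw1.le⟩
  calc |(4 * a w ^ 2 * t ^ 2 - 2 * a w) * potentialIntegrand A σz z a c ε t w|
      = |4 * a w ^ 2 * t ^ 2 - 2 * a w| * |potentialIntegrand A σz z a c ε t w| := abs_mul _ _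
    _ ≤ (1 - w) * (4 * m ^ 2 * t ^ 2 + 2 * m) * (1 / ((1 - w) * A ^ ((1 : ℝ) / 2))) := by
        gcongr
        have hpos : (0 : ℝ) < (1 - w) * A ^ ((1 : ℝ) / 2) := by positivity
        rw [potentialIntegrand, abs_div, abs_of_pos (Real.exp_pos _),
          abs_of_pos (hpos.trans_le hden)]
        exact div_le_div₀ zero_le_one hexp hpos hden
    _ = (4 * m ^ 2 * t ^ 2 + 2 * m) / A ^ ((1 : ℝ) / 2) := by
        field_simp

end potentialIntegrand

theorem integrableOn_and_tendsto_setIntegral_iteratedDeriv_two {f : ℝ → ℝ → ℝ → ℝ}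
    {A σz z m t : ℝ} {a c : ℝ → ℝ} (hA0 : 0 < A) (hA1 : A ≤ 1)
    (ha_meas : Measurable a) (hc_meas : Measurable c)
    (ha : ∀ w ∈ Ioo (0 : ℝ) 1, 0 ≤ a w ∧ a w ≤ (1 - w) * m) (hc : ∀ w ∈ Ioo (0 : ℝ) 1, 0 ≤ c w)
    (hf : ∀ ε, 0 ≤ ε → ∀ s w, f ε s w = potentialIntegrand A σz z a c ε s w) :
    IntegrableOn (fun w => iteratedDeriv 2 (fun s => f 0 s w) t) (Ioo 0 1) ∧
    Tendsto (fun ε => ∫ w in Ioo (0 : ℝ) 1, iteratedDeriv 2 (fun s => f ε s w) t) (𝓝[>] 0)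
      (𝓝 (∫ w in Ioo (0 : ℝ) 1, iteratedDeriv 2 (fun s => f 0 s w) t)) := by
  set F : ℝ → ℝ → ℝ := fun ε w =>
    (4 * a w ^ 2 * t ^ 2 - 2 * a w) * potentialIntegrand A σz z a c ε t w
  set K : ℝ := (4 * m ^ 2 * t ^ 2 + 2 * m) / A ^ ((1 : ℝ) / 2)
  have hF : ∀ ε, 0 ≤ ε → (fun w => iteratedDeriv 2 (fun s => f ε s w) t) = F ε :=
    fun ε hε => funext fun w => by
      simp only [hf ε hε, iteratedDeriv_two_potentialIntegrand, F]
  have hmeas (ε : ℝ) : AEStronglyMeasurable (F ε) (volume.restrict (Ioo 0 1)) :=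
    (by fun_prop : Measurable fun w => 4 * a w ^ 2 * t ^ 2 - 2 * a w).mul
      (measurable_potentialIntegrand ha_meas hc_meas ε t) |>.aestronglyMeasurable
  have hbound : ∀ ε, 0 ≤ ε → ∀ᵐ w ∂volume.restrict (Ioo 0 1), ‖F ε w‖ ≤ K :=
    fun ε hε => ae_restrict_of_forall_mem measurableSet_Ioo fun w hw =>
      abs_mul_potentialIntegrand_le hA0 hA1 hε hw (ha w hw).1 (ha w hw).2 (hc w hw)
  have hlim : ∀ᵐ w ∂volume.restrict (Ioo 0 1), Tendsto (fun ε => F ε w) (𝓝[>] 0) (𝓝 (F 0 w)) :=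
    ae_restrict_of_forall_mem measurableSet_Ioo fun w hw =>
      ((continuousAt_potentialIntegrand hA0.le hw t).const_mul _).tendsto.mono_left
        nhdsWithin_le_nhds
  rw [hF 0 le_rfl]
  refine ⟨Integrable.of_bound (hmeas 0) K (hbound 0 le_rfl), ?_⟩
  refine (tendsto_integral_filter_of_dominated_convergence (fun _ => K)
    (.of_forall hmeas) ?_ (integrable_const K) hlim).congr' ?_
  · filter_upwards [self_mem_nhdsWithin] with ε hε using hbound ε (le_of_lt hε)
  · filter_upwards [self_mem_nhdsWithin] with ε hε using by rw [hF ε (le_of_lt hε)]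

theorem two_dim_limit_Ess_general (x y z σx σy σz : ℝ)
    (hσx : 0 < σx) (hσy : 0 < σy) (hyx : σy ≤ σx)
    (A : ℝ) (hA : A = σy ^ 2 / σx ^ 2)
    (ψ : ℝ → ℝ → ℝ → ℝ → ℝ)
    (hψ : ∀ ε, 0 ≤ ε → ∀ x' y' w, ψ ε x' y' w =
      Real.exp (-((1 - w) * x' ^ 2 / (2 * σx ^ 2 * (1 - w + A * w)))
          - (1 - w) * y' ^ 2 / (2 * σy ^ 2)
          - (1 - w) * z ^ 2 / (2 * σz ^ 2 * (1 - w + ε * w))) /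
        ((1 - w) ^ ((1 : ℝ) / 2) * (1 - w + A * w) ^ ((1 : ℝ) / 2)
          * (1 - w + ε * w) ^ ((1 : ℝ) / 2))) :
    IntegrableOn (fun w => iteratedDeriv 2 (fun x' => ψ 0 x' y w) x)
      (Set.Ioo (0 : ℝ) 1) ∧
    IntegrableOn (fun w => iteratedDeriv 2 (fun y' => ψ 0 x y' w) y)
      (Set.Ioo (0 : ℝ) 1) ∧
    Tendsto (fun ε => ∫ w in Set.Ioo (0 : ℝ) 1, iteratedDeriv 2 (fun x' => ψ ε x' y w) x)
      (𝓝[>] 0)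
      (𝓝 (∫ w in Set.Ioo (0 : ℝ) 1, iteratedDeriv 2 (fun x' => ψ 0 x' y w) x)) ∧
    Tendsto (fun ε => ∫ w in Set.Ioo (0 : ℝ) 1, iteratedDeriv 2 (fun y' => ψ ε x y' w) y)
      (𝓝[>] 0)
      (𝓝 (∫ w in Set.Ioo (0 : ℝ) 1, iteratedDeriv 2 (fun y' => ψ 0 x y' w) y)) := by
  have hA0 : 0 < A := by rw [hA]; positivity
  have hA1 : A ≤ 1 := by rw [hA, div_le_one (by positivity)]; gcongr
  have hAw {w : ℝ} (hw : w ∈ Ioo (0 : ℝ) 1) : A ≤ 1 - w + A * w :=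
    le_one_sub_add_mul hA1 hw.2.le
  have h1w {w : ℝ} (hw : w ∈ Ioo (0 : ℝ) 1) : 0 ≤ 1 - w := sub_nonneg.2 hw.2.le
  obtain ⟨hx_int, hx_lim⟩ := integrableOn_and_tendsto_setIntegral_iteratedDeriv_two
    (f := fun ε s w => ψ ε s y w) (a := fun w => (1 - w) / (2 * σx ^ 2 * (1 - w + A * w)))
    (c := fun w => (1 - w) * y ^ 2 / (2 * σy ^ 2)) (m := 1 / (2 * σx ^ 2 * A))
    (σz := σz) (z := z) (t := x) hA0 hA1 (by fun_prop) (by fun_prop)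
    (fun w hw => ⟨div_nonneg (h1w hw) (by nlinarith [hAw hw]), by
      rw [mul_one_div]; gcongr; exacts [h1w hw, hAw hw]⟩)
    (fun w hw => div_nonneg (mul_nonneg (h1w hw) (sq_nonneg y)) (by positivity))
    (fun ε hε s w => by rw [hψ ε hε, potentialIntegrand]; congr 2; ring)
  obtain ⟨hy_int, hy_lim⟩ := integrableOn_and_tendsto_setIntegral_iteratedDeriv_two
    (f := fun ε s w => ψ ε x s w) (a := fun w => (1 - w) / (2 * σy ^ 2))
    (c := fun w => (1 - w) * x ^ 2 / (2 * σx ^ 2 * (1 - w + A * w))) (m := 1 / (2 * σy ^ 2))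
    (σz := σz) (z := z) (t := y) hA0 hA1 (by fun_prop) (by fun_prop)
    (fun w hw => ⟨div_nonneg (h1w hw) (by positivity), (mul_one_div _ _).ge⟩)
    (fun w hw => div_nonneg (mul_nonneg (h1w hw) (sq_nonneg x)) (by nlinarith [hAw hw]))
    (fun ε hε s w => by rw [hψ ε hε, potentialIntegrand]; congr 2; ring)
  exact ⟨hx_int, hy_int, hx_lim, hy_lim⟩

/-- For the second transverse derivatives of the integrand of Eq. (16) (entering
the focusing field `E_ss` via Eq. (22)), the limit `ε → 0⁺` can be interchanged
with the `w`-integration, and the limiting integrals (with `ψ₀` obtained by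
setting `ε = 0`) are finite. Here `ψ ε x' y' w` is the integrand of Eq. (16)
viewed as a function of the transverse coordinates `(x', y')`. -/
theorem two_dim_limit_Ess (x y z σx σy σz : ℝ)
    (hσx : 0 < σx) (hσy : 0 < σy) (hσz : 0 < σz) (hyx : σy ≤ σx)
    (A : ℝ) (hA : A = σy ^ 2 / σx ^ 2)
    (ψ : ℝ → ℝ → ℝ → ℝ → ℝ)
    (hψ : ∀ ε, 0 ≤ ε → ∀ x' y' w, ψ ε x' y' w =
      Real.exp (-((1 - w) * x' ^ 2 / (2 * σx ^ 2 * (1 - w + A * w)))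
          - (1 - w) * y' ^ 2 / (2 * σy ^ 2)
          - (1 - w) * z ^ 2 / (2 * σz ^ 2 * (1 - w + ε * w))) /
        ((1 - w) ^ ((1 : ℝ) / 2) * (1 - w + A * w) ^ ((1 : ℝ) / 2)
          * (1 - w + ε * w) ^ ((1 : ℝ) / 2))) :
    IntegrableOn (fun w => iteratedDeriv 2 (fun x' => ψ 0 x' y w) x)
      (Set.Ioo (0 : ℝ) 1) ∧
    IntegrableOn (fun w => iteratedDeriv 2 (fun y' => ψ 0 x y' w) y)
      (Set.Ioo (0 : ℝ) 1) ∧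
    Tendsto (fun ε => ∫ w in Set.Ioo (0 : ℝ) 1, iteratedDeriv 2 (fun x' => ψ ε x' y w) x)
      (𝓝[>] 0)
      (𝓝 (∫ w in Set.Ioo (0 : ℝ) 1, iteratedDeriv 2 (fun x' => ψ 0 x' y w) x)) ∧
    Tendsto (fun ε => ∫ w in Set.Ioo (0 : ℝ) 1, iteratedDeriv 2 (fun y' => ψ ε x y' w) y)
      (𝓝[>] 0)
      (𝓝 (∫ w in Set.Ioo (0 : ℝ) 1, iteratedDeriv 2 (fun y' => ψ 0 x y' w) y)) :=
  two_dim_limit_Ess_general x y z σx σy σz hσx hσy hyx A hA ψ hψ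
end

section
/- Fix real numbers x, y, z and positive reals σ_x, σ_y, σ_z with σ_y < σ_x, and set A := σ_y²/σ_x², so 0 < A < 1. For 0 < ε < 1 define I_ε := ∫₀¹ (1−w)^{1/2}·exp(−(1−w)x²/(2σ_x²(1−w+Aw)) − (1−w)y²/(2σ_y²) − (1−w)z²/(2σ_z²(1−w+εw))) / ((1−w+Aw)^{1/2}·(1−w+εw)^{3/2}) dw. Then I_ε ≤ (2/((1−A)^{1/2}·ε^{1/2}))·((1 − ε^{1/2})/(1 − ε)). -/
/-!
Since the exponent is non-positive, the exponential is at most `1`; and since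
`1 - w + A w ≥ (1 - A)(1 - w)`, the factor `(1 - w)^{1/2} / (1 - w + A w)^{1/2}` is at most
`(1 - A)^{-1/2}`. What remains is `(1 - A)^{-1/2} ∫₀¹ (1 - w + ε w)^{-3/2} dw`, and
`(2 / (1 - ε)) (1 - w + ε w)^{-1/2}` is an antiderivative of the integrand.
-/

open MeasureTheory Set

lemma gaussian_exponent_nonpos {s a b : ℝ} (hs : 0 ≤ s) (ha : 0 ≤ a) (hb : 0 ≤ b)
    (x y z σx σy σz : ℝ) :
    -(s * x ^ 2 / (2 * σx ^ 2 * a)) - s * y ^ 2 / (2 * σy ^ 2)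
      - s * z ^ 2 / (2 * σz ^ 2 * b) ≤ 0 := by
  have hx : 0 ≤ s * x ^ 2 / (2 * σx ^ 2 * a) := by positivity
  have hy : 0 ≤ s * y ^ 2 / (2 * σy ^ 2) := by positivity
  have hz : 0 ≤ s * z ^ 2 / (2 * σz ^ 2 * b) := by positivity
  linarith

lemma one_sub_add_mul_pos {c w : ℝ} (hc : 0 < c) (hw : w ∈ Icc (0 : ℝ) 1) :
    0 < 1 - w + c * w := by
  obtain ⟨hw0, hw1⟩ := hw
  rcases hw1.lt_or_eq with hw1 | rfl
  · nlinarith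
  · linarith

lemma rpow_half_div_le_inv {A w : ℝ} (hA0 : 0 ≤ A) (hA1 : A < 1) (hw0 : 0 ≤ w) (hw1 : w < 1) :
    ((1 - w) / (1 - w + A * w)) ^ ((1 : ℝ) / 2) ≤ ((1 - A) ^ ((1 : ℝ) / 2))⁻¹ := by
  have h1A : 0 < 1 - A := by linarith
  have hratio : (1 - w) / (1 - w + A * w) ≤ (1 - A)⁻¹ := by
    rw [div_le_iff₀ (by nlinarith), inv_mul_eq_div, le_div_iff₀ h1A]
    nlinarith
  calc ((1 - w) / (1 - w + A * w)) ^ ((1 : ℝ) / 2)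
      ≤ (1 - A)⁻¹ ^ ((1 : ℝ) / 2) :=
        Real.rpow_le_rpow (div_nonneg (by linarith) (by nlinarith)) hratio (by norm_num)
    _ = ((1 - A) ^ ((1 : ℝ) / 2))⁻¹ := Real.inv_rpow h1A.le _

lemma continuousOn_inv_rpow_three_halves {ε : ℝ} (hε : 0 < ε) :
    ContinuousOn (fun w : ℝ => ((1 - w + ε * w) ^ ((3 : ℝ) / 2))⁻¹) (Icc 0 1) := by
  refine ContinuousOn.inv₀ ?_ fun w hw =>
    (Real.rpow_pos_of_pos (one_sub_add_mul_pos hε hw) _).ne'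
  exact ContinuousOn.rpow_const (by fun_prop) fun _ _ => Or.inr (by norm_num)

lemma hasDerivAt_antideriv_inv_rpow_three_halves {ε w : ℝ} (hε1 : ε ≠ 1)
    (hw : 0 < 1 - w + ε * w) :
    HasDerivAt (fun t => 2 / (1 - ε) * (1 - t + ε * t) ^ (-(1 : ℝ) / 2))
      ((1 - w + ε * w) ^ ((3 : ℝ) / 2))⁻¹ w := by
  have hb : HasDerivAt (fun t : ℝ => 1 - t + ε * t) (-1 + ε) w := by
    simpa only [mul_one] using
      ((hasDerivAt_id' w).const_sub 1).fun_add ((hasDerivAt_id' w).const_mul ε)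
  refine ((hb.rpow_const (Or.inl hw.ne')).const_mul (2 / (1 - ε))).congr_deriv ?_
  have h1ε : 1 - ε ≠ 0 := sub_ne_zero.2 hε1.symm
  rw [show -(1 : ℝ) / 2 - 1 = -((3 : ℝ) / 2) by norm_num, Real.rpow_neg hw.le]
  field_simp
  ring

theorem integral_inv_rpow_three_halves {ε : ℝ} (hε0 : 0 < ε) (hε1 : ε ≠ 1) :
    ∫ w in Ioo (0 : ℝ) 1, ((1 - w + ε * w) ^ ((3 : ℝ) / 2))⁻¹
      = 2 / ε ^ ((1 : ℝ) / 2) * ((1 - ε ^ ((1 : ℝ) / 2)) / (1 - ε)) := by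
  have hderiv : ∀ w ∈ uIcc (0 : ℝ) 1,
      HasDerivAt (fun t => 2 / (1 - ε) * (1 - t + ε * t) ^ (-(1 : ℝ) / 2))
        ((1 - w + ε * w) ^ ((3 : ℝ) / 2))⁻¹ w := fun w hw =>
    hasDerivAt_antideriv_inv_rpow_three_halves hε1
      (one_sub_add_mul_pos hε0 (by simpa using hw))
  have hint :
      IntervalIntegrable (fun w : ℝ => ((1 - w + ε * w) ^ ((3 : ℝ) / 2))⁻¹) volume 0 1 :=
    (continuousOn_inv_rpow_three_halves hε0).intervalIntegrable_of_Icc zero_le_one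
  rw [← integral_Ioc_eq_integral_Ioo, ← intervalIntegral.integral_of_le zero_le_one,
    intervalIntegral.integral_eq_sub_of_hasDerivAt hderiv hint]
  have h1ε : 1 - ε ≠ 0 := sub_ne_zero.2 hε1.symm
  have hsqrt : ε ^ ((1 : ℝ) / 2) ≠ 0 := (Real.rpow_pos_of_pos hε0 _).ne'
  simp only [sub_self, zero_add, mul_one, mul_zero, sub_zero, add_zero, Real.one_rpow]
  rw [show -(1 : ℝ) / 2 = -((1 : ℝ) / 2) by ring, Real.rpow_neg hε0.le]
  field_simp

lemma integrand_nonneg {A w b E : ℝ} (hA0 : 0 ≤ A) (hw0 : 0 ≤ w) (hw1 : w < 1)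
    (hb : 0 ≤ b) :
    0 ≤ (1 - w) ^ ((1 : ℝ) / 2) * Real.exp E
      / ((1 - w + A * w) ^ ((1 : ℝ) / 2) * b ^ ((3 : ℝ) / 2)) := by
  have ha : 0 ≤ 1 - w + A * w := by nlinarith
  have h1w : 0 ≤ 1 - w := by linarith
  positivity

lemma integrand_le {A w b E : ℝ} (hA0 : 0 ≤ A) (hA1 : A < 1) (hw0 : 0 ≤ w) (hw1 : w < 1)
    (hb : 0 ≤ b) (hE : E ≤ 0) :
    (1 - w) ^ ((1 : ℝ) / 2) * Real.exp E
        / ((1 - w + A * w) ^ ((1 : ℝ) / 2) * b ^ ((3 : ℝ) / 2))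
      ≤ ((1 - A) ^ ((1 : ℝ) / 2))⁻¹ * (b ^ ((3 : ℝ) / 2))⁻¹ := by
  have h1w : 0 ≤ 1 - w := by linarith
  have ha : 0 ≤ 1 - w + A * w := by nlinarith
  calc _ ≤ (1 - w) ^ ((1 : ℝ) / 2) * 1
        / ((1 - w + A * w) ^ ((1 : ℝ) / 2) * b ^ ((3 : ℝ) / 2)) := by
        gcongr
        exact Real.exp_le_one_iff.2 hE
    _ = ((1 - w) / (1 - w + A * w)) ^ ((1 : ℝ) / 2) * (b ^ ((3 : ℝ) / 2))⁻¹ := by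
        rw [Real.div_rpow h1w ha, mul_one, div_mul_eq_div_div, div_eq_mul_inv _ (b ^ _)]
    _ ≤ ((1 - A) ^ ((1 : ℝ) / 2))⁻¹ * (b ^ ((3 : ℝ) / 2))⁻¹ := by
        gcongr
        exact rpow_half_div_le_inv hA0 hA1 hw0 hw1

theorem I_eps_upper_bound_general (x y z σx σy σz : ℝ)
    (hσy : 0 < σy) (hyx : σy < σx)
    (A : ℝ) (hA : A = σy ^ 2 / σx ^ 2)
    (ε : ℝ) (hε0 : 0 < ε) (hε1 : ε < 1) :
    ∫ w in Set.Ioo (0 : ℝ) 1,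
      (1 - w) ^ ((1 : ℝ) / 2) *
        Real.exp (-((1 - w) * x ^ 2 / (2 * σx ^ 2 * (1 - w + A * w)))
            - (1 - w) * y ^ 2 / (2 * σy ^ 2)
            - (1 - w) * z ^ 2 / (2 * σz ^ 2 * (1 - w + ε * w))) /
        ((1 - w + A * w) ^ ((1 : ℝ) / 2) * (1 - w + ε * w) ^ ((3 : ℝ) / 2))
      ≤ (2 / ((1 - A) ^ ((1 : ℝ) / 2) * ε ^ ((1 : ℝ) / 2))) *
          ((1 - ε ^ ((1 : ℝ) / 2)) / (1 - ε)) := by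
  have hA0 : 0 ≤ A := hA ▸ by positivity
  have hA1 : A < 1 := by
    rw [hA, div_lt_one (pow_pos (hσy.trans hyx) 2)]
    exact pow_lt_pow_left₀ hyx hσy.le two_ne_zero
  have hb : ∀ w ∈ Ioo (0 : ℝ) 1, 0 ≤ 1 - w + ε * w := fun w hw =>
    (one_sub_add_mul_pos hε0 (Ioo_subset_Icc_self hw)).le
  calc _ ≤ ∫ w in Ioo (0 : ℝ) 1,
        ((1 - A) ^ ((1 : ℝ) / 2))⁻¹ * ((1 - w + ε * w) ^ ((3 : ℝ) / 2))⁻¹ := by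
        refine integral_mono_of_nonneg ?_ ?_ ?_
        · exact ae_restrict_of_forall_mem measurableSet_Ioo fun w hw =>
            integrand_nonneg hA0 hw.1.le hw.2 (hb w hw)
        · exact ((continuousOn_inv_rpow_three_halves hε0).integrableOn_Icc.mono_set
            Ioo_subset_Icc_self).const_mul _
        · refine ae_restrict_of_forall_mem measurableSet_Ioo fun w hw => ?_
          have h1w : 0 ≤ 1 - w := by linarith [hw.2]
          exact integrand_le hA0 hA1 hw.1.le hw.2 (hb w hw)
            (gaussian_exponent_nonpos h1w (by nlinarith [hw.1]) (hb w hw) x y z σx σy σz)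
    _ = ((1 - A) ^ ((1 : ℝ) / 2))⁻¹
        * (2 / ε ^ ((1 : ℝ) / 2) * ((1 - ε ^ ((1 : ℝ) / 2)) / (1 - ε))) := by
        rw [integral_const_mul, integral_inv_rpow_three_halves hε0 hε1.ne]
    _ = _ := by ring

/-- The upper bound on the integral `I_ε` appearing in the longitudinal field
component `E_sz` (Eqs. (26)–(28)):
`I_ε ≤ (2/((1−A)^{1/2} ε^{1/2})) · (1 − ε^{1/2})/(1 − ε)`. -/
theorem I_eps_upper_bound (x y z σx σy σz : ℝ)
    (hσx : 0 < σx) (hσy : 0 < σy) (hσz : 0 < σz) (hyx : σy < σx)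
    (A : ℝ) (hA : A = σy ^ 2 / σx ^ 2)
    (ε : ℝ) (hε0 : 0 < ε) (hε1 : ε < 1) :
    ∫ w in Set.Ioo (0 : ℝ) 1,
      (1 - w) ^ ((1 : ℝ) / 2) *
        Real.exp (-((1 - w) * x ^ 2 / (2 * σx ^ 2 * (1 - w + A * w)))
            - (1 - w) * y ^ 2 / (2 * σy ^ 2)
            - (1 - w) * z ^ 2 / (2 * σz ^ 2 * (1 - w + ε * w))) /
        ((1 - w + A * w) ^ ((1 : ℝ) / 2) * (1 - w + ε * w) ^ ((3 : ℝ) / 2))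
      ≤ (2 / ((1 - A) ^ ((1 : ℝ) / 2) * ε ^ ((1 : ℝ) / 2))) *
          ((1 - ε ^ ((1 : ℝ) / 2)) / (1 - ε)) :=
  I_eps_upper_bound_general x y z σx σy σz hσy hyx A hA ε hε0 hε1
end
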